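/- arXiv:math-ph/0411067 — 2 statements merged into one kernel-verified Lean document; each statement's English description precedes it below -/
import Mathlib

section
/- Let f(x) = A(x)Q(x) with A(x) = ∏_{i=1}^{g+1}(x - a_i), Q(x) = ∏_{j=1}^{g}(x - c_j), the a_i distinct and a_i ≠ 0 for all i. Let U(x) = ∏_{a=1}^{g}(x - x_a) with distinct roots x_a, none equal to 0 or to any a_i, choose y_a with y_a² = f(x_a), let V be the Lagrange interpolant with V(x_a) = y_a, and W = (f − V²)/U. Then ∑_{i=1}^{g+1} W(a_i)/(a_i · A'(a_i)) = −W(0)/A(0) + 1. -/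
open Polynomial BigOperators Finset

lemma key_coeff {ι : Type*} [DecidableEq ι] (s : Finset ι) (v : ι → ℂ) (hvs : Set.InjOn v s)
    (P : Polynomial ℂ) (hP : P.degree < s.card) :
    ∑ i ∈ s, P.eval (v i) * Lagrange.nodalWeight s v i = P.coeff (s.card - 1) := by
  conv_rhs => rw [Lagrange.eq_interpolate hvs hP]
  rw [Lagrange.interpolate_apply, Polynomial.finset_sum_coeff]
  refine Finset.sum_congr rfl fun i hi => ?_
  rw [Lagrange.basis_eq_prod_sub_inv_mul_nodal_div hi, ← Lagrange.nodal_erase_eq_nodal_div hi,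
    coeff_C_mul, coeff_C_mul]
  have h1 : (Lagrange.nodal (s.erase i) v).natDegree = s.card - 1 := by
    rw [Lagrange.natDegree_nodal, Finset.card_erase_of_mem hi]
  rw [← h1, Polynomial.Monic.coeff_natDegree Lagrange.nodal_monic]
  ring

/-- With `f = A·Q`, `A = ∏(x - aᵢ)` (distinct nonzero `aᵢ`),
`Q = ∏(x - c_j)`, `U = ∏(x - x_a)` (distinct roots, nonzero, distinct from the `aᵢ`),
`y_a² = f(x_a)`, `V` the Lagrange interpolant with `V(x_a) = y_a`, and
`W = (f - V²)/U`, the residue identity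
`∑ W(aᵢ)/(aᵢ A'(aᵢ)) = -W(0)/A(0) + 1` holds, the `1` being the residue of
`W(x)/(x A(x))` at infinity. -/
theorem stmt6 (g : ℕ) (a : Fin (g + 1) → ℂ) (c : Fin g → ℂ) (x y : Fin g → ℂ)
    (ha : Function.Injective a) (ha0 : ∀ i, a i ≠ 0)
    (hx : Function.Injective x) (hx0 : ∀ α, x α ≠ 0)
    (hxa : ∀ α i, x α ≠ a i)
    (hy : ∀ α, (y α) ^ 2 =
      ((∏ i, (X - C (a i))) * ∏ j, (X - C (c j))).eval (x α))
    (V : Polynomial ℂ) (hV : V.degree < (g : WithBot ℕ))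
    (hVx : ∀ α, V.eval (x α) = y α)
    (W : Polynomial ℂ)
    (hW : (∏ i, (X - C (a i))) * (∏ j, (X - C (c j))) - V ^ 2
        = (∏ α, (X - C (x α))) * W) :
    ∑ i, W.eval (a i) /
        (a i * (Polynomial.derivative (∏ j, (X - C (a j)))).eval (a i))
      = -W.eval 0 / (∏ i, (X - C (a i))).eval 0 + 1 := by
  classical
  set A : Polynomial ℂ := ∏ i, (X - C (a i)) with hA
  set Q : Polynomial ℂ := ∏ j, (X - C (c j)) with hQ
  set U : Polynomial ℂ := ∏ α, (X - C (x α)) with hU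
  have hAm : A.Monic := monic_prod_of_monic _ _ fun i _ => monic_X_sub_C _
  have hQm : Q.Monic := monic_prod_of_monic _ _ fun i _ => monic_X_sub_C _
  have hUm : U.Monic := monic_prod_of_monic _ _ fun i _ => monic_X_sub_C _
  have hAdeg : A.natDegree = g + 1 := by
    rw [hA, natDegree_prod_of_monic _ _ fun i _ => monic_X_sub_C _]
    simp
  have hQdeg : Q.natDegree = g := by
    rw [hQ, natDegree_prod_of_monic _ _ fun i _ => monic_X_sub_C _]
    simp
  have hUdeg : U.natDegree = g := by
    rw [hU, natDegree_prod_of_monic _ _ fun i _ => monic_X_sub_C _]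
    simp
  have hAQm : (A * Q).Monic := hAm.mul hQm
  have hAQdeg : (A * Q).natDegree = 2 * g + 1 := by
    rw [hAm.natDegree_mul hQm, hAdeg, hQdeg]; ring
  have hV2 : (V ^ 2).degree < (A * Q).degree := by
    rw [degree_eq_natDegree hAQm.ne_zero, hAQdeg]
    rcases eq_or_ne V 0 with h | h
    · simp [h]
      exact WithBot.bot_lt_coe _
    · have hVg : V.natDegree < g := (natDegree_lt_iff_degree_lt h).mpr hV
      have h2 : (V ^ 2).degree ≤ ((V ^ 2).natDegree : WithBot ℕ) := degree_le_natDegree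
      refine lt_of_le_of_lt h2 ?_
      have : (V ^ 2).natDegree < 2 * g + 1 := by
        rw [natDegree_pow]; omega
      exact_mod_cast this
  have hfm : (A * Q - V ^ 2).Monic := by
    rw [sub_eq_add_neg]
    exact hAQm.add_of_left (by rwa [degree_neg])
  have hfdeg : (A * Q - V ^ 2).natDegree = 2 * g + 1 := by
    rw [natDegree_sub_eq_left_of_natDegree_lt, hAQdeg]
    rcases eq_or_ne V 0 with h | h
    · simp [h, hAQdeg]
    · have : (V ^ 2).degree < ((A*Q).natDegree : WithBot ℕ) := by
        rwa [← degree_eq_natDegree hAQm.ne_zero]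
      exact (natDegree_lt_iff_degree_lt (pow_ne_zero _ h)).mpr this
  have hWne : W ≠ 0 := by
    intro h
    rw [h, mul_zero] at hW
    exact hfm.ne_zero hW
  have hWdeg : W.natDegree = g + 1 := by
    have := congrArg natDegree hW
    rw [hfdeg, natDegree_mul hUm.ne_zero hWne, hUdeg] at this
    omega
  have hWm : W.Monic := by
    have := congrArg leadingCoeff hW
    rw [hfm.leadingCoeff, leadingCoeff_mul, hUm.leadingCoeff, one_mul] at this
    exact this.symm
  have hcoeff : W.coeff (g + 1) = 1 := by
    have := hWm.coeff_natDegree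
    rwa [hWdeg] at this
  -- the nodes: 0 and the aᵢ
  set v : Fin (g + 1 + 1) → ℂ := Fin.cons 0 a with hv
  have hvinj : Function.Injective v := by
    intro k l hkl
    rcases Fin.eq_zero_or_eq_succ k with rfl | ⟨k', rfl⟩ <;>
      rcases Fin.eq_zero_or_eq_succ l with rfl | ⟨l', rfl⟩
    · rfl
    · simp only [hv, Fin.cons_zero, Fin.cons_succ] at hkl
      exact absurd hkl.symm (ha0 l')
    · simp only [hv, Fin.cons_zero, Fin.cons_succ] at hkl
      exact absurd hkl (ha0 k')
    · simp only [hv, Fin.cons_succ] at hkl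
      exact congrArg Fin.succ (ha hkl)
  have hcard : (univ : Finset (Fin (g + 1 + 1))).card = g + 2 := by simp
  have hWdegree : W.degree < ((univ : Finset (Fin (g + 1 + 1))).card : WithBot ℕ) := by
    rw [hcard]
    rw [← natDegree_lt_iff_degree_lt hWne, hWdeg]
    omega
  have hkey := key_coeff univ v hvinj.injOn W hWdegree
  rw [hcard] at hkey
  norm_num [hcoeff] at hkey
  have hN : Lagrange.nodal (univ : Finset (Fin (g + 1 + 1))) v = X * A := by
    rw [Lagrange.nodal_eq, Fin.prod_univ_succ]
    simp [hv, hA]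
  have hweight : ∀ k, Lagrange.nodalWeight (univ : Finset (Fin (g + 1 + 1))) v k
      = (Polynomial.eval (v k) (Polynomial.derivative (X * A)))⁻¹ := by
    intro k
    rw [Lagrange.nodalWeight_eq_eval_derivative_nodal (mem_univ k), hN]
  have hder : Polynomial.derivative (X * A) = A + X * Polynomial.derivative A := by
    rw [derivative_mul, derivative_X, one_mul]
  have hAzero : ∀ i, A.eval (a i) = 0 := by
    intro i
    rw [hA, eval_prod]
    exact Finset.prod_eq_zero (mem_univ i) (by simp)
  simp only [hweight, hder] at hkey
  rw [Fin.sum_univ_succ] at hkey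
  simp only [hv, Fin.cons_zero, Fin.cons_succ, eval_add, eval_mul, eval_X, zero_mul, add_zero]
    at hkey
  have hterm : ∀ i, W.eval (a i) * (A.eval (a i) + a i * (Polynomial.derivative A).eval (a i))⁻¹
      = W.eval (a i) * (a i * (Polynomial.derivative A).eval (a i))⁻¹ := by
    intro i; rw [hAzero i, zero_add]
  rw [Finset.sum_congr rfl fun i _ => hterm i] at hkey
  simp only [div_eq_mul_inv, neg_div]
  linear_combination hkey
end

section
/- Let q : ℝ → ℝ^{g+1} be smooth with ∑_{i=1}^{g+1} q_i(t)² = 1 for all t and satisfying q̈_i = −(2L + a_i)q_i with L = (1/2)∑ q̇_i² − (1/2)∑ a_i q_i². Then for each i = 1, …, g + 1 (with distinct a_1, …, a_{g+1}), the quantity m_i(t) := q_i² + ∑_{j ≠ i} (q_i q̇_j − q_j q̇_i)²/(a_i − a_j) is constant in t. -/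
open BigOperators Finset

/-- For a smooth solution of the Neumann system on the sphere with
distinct constants `aᵢ`, each Uhlenbeck quantity
`mᵢ = qᵢ² + ∑_{j ≠ i} (qᵢ q̇ⱼ - qⱼ q̇ᵢ)²/(aᵢ - aⱼ)` is constant in `t`. -/
theorem stmt10 (g : ℕ) (a : Fin (g + 1) → ℝ) (ha : Function.Injective a)
    (q : Fin (g + 1) → ℝ → ℝ) (hq : ∀ i, ContDiff ℝ (⊤ : ℕ∞) (q i))
    (hc1 : ∀ t, ∑ i, (q i t) ^ 2 = 1)
    (heq : ∀ i t, deriv (deriv (q i)) t =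
      -(2 * ((1 / 2) * ∑ j, (deriv (q j) t) ^ 2
            - (1 / 2) * ∑ j, a j * (q j t) ^ 2) + a i) * q i t) :
    ∀ i, ∀ s t : ℝ,
      (q i s) ^ 2 + ∑ j ∈ univ.erase i,
          (q i s * deriv (q j) s - q j s * deriv (q i) s) ^ 2 / (a i - a j)
        = (q i t) ^ 2 + ∑ j ∈ univ.erase i,
            (q i t * deriv (q j) t - q j t * deriv (q i) t) ^ 2 / (a i - a j) := by
  intro i s t
  set F : ℝ → ℝ := fun u => (q i u) ^ 2 + ∑ j ∈ univ.erase i,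
      (q i u * deriv (q j) u - q j u * deriv (q i) u) ^ 2 / (a i - a j) with hFdef
  suffices h : ∀ u, HasDerivAt F 0 u by
    exact is_const_of_deriv_eq_zero (fun u => (h u).differentiableAt)
      (fun u => (h u).deriv) s t
  intro u
  have hdq : ∀ j, HasDerivAt (q j) (deriv (q j) u) u :=
    fun j => ((hq j).differentiable (by simp) u).hasDerivAt
  have hC : ∀ j, ContDiff ℝ ((⊤ : ℕ∞) : WithTop ℕ∞) (deriv (q j)) :=
    fun j => (contDiff_infty_iff_deriv.mp ((hq j).of_le (by simp))).2
  have hdq' : ∀ j, HasDerivAt (deriv (q j)) (deriv (deriv (q j)) u) u :=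
    fun j => ((hC j).differentiable (by simp) u).hasDerivAt
  -- the derivative of the constraint gives ∑ q q̇ = 0
  have hsum : ∑ k, q k u * deriv (q k) u = 0 := by
    have h1 : HasDerivAt (fun v => ∑ k, (q k v) ^ 2)
        (∑ k, 2 * q k u * deriv (q k) u) u := by
      apply HasDerivAt.fun_sum
      intro k _
      simpa [mul_comm, mul_assoc] using (hdq k).fun_pow 2
    have h2 : HasDerivAt (fun v : ℝ => ∑ k, (q k v) ^ 2) 0 u := by
      have : (fun v : ℝ => ∑ k, (q k v) ^ 2) = fun _ => (1 : ℝ) := funext hc1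
      rw [this]; exact hasDerivAt_const u 1
    have h3 := h1.unique h2
    have h4 : ∑ k, 2 * q k u * deriv (q k) u
        = 2 * ∑ k, q k u * deriv (q k) u := by
      rw [Finset.mul_sum]; exact Finset.sum_congr rfl fun k _ => by ring
    nlinarith [h3, h4]
  -- per-term derivative
  have hterm : ∀ j ∈ univ.erase i,
      HasDerivAt (fun v => (q i v * deriv (q j) v - q j v * deriv (q i) v) ^ 2 / (a i - a j))
        (2 * (q i u * deriv (q j) u - q j u * deriv (q i) u) * (q i u * q j u)) u := by
    intro j hj
    have hne : a i ≠ a j := fun h => (Finset.mem_erase.mp hj).1 (ha h).symm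
    have hW : HasDerivAt (fun v => q i v * deriv (q j) v - q j v * deriv (q i) v)
        (q i u * deriv (deriv (q j)) u - q j u * deriv (deriv (q i)) u) u := by
      have := ((hdq i).fun_mul (hdq' j)).fun_sub ((hdq j).fun_mul (hdq' i))
      refine this.congr_deriv ?_; ring
    have hW2 := (hW.fun_pow 2).div_const (a i - a j)
    refine hW2.congr_deriv ?_
    rw [heq i u, heq j u]
    have : a i - a j ≠ 0 := sub_ne_zero.mpr hne
    field_simp
    ring
  have hS : HasDerivAt (fun v => ∑ j ∈ univ.erase i,
        (q i v * deriv (q j) v - q j v * deriv (q i) v) ^ 2 / (a i - a j))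
      (∑ j ∈ univ.erase i,
        2 * (q i u * deriv (q j) u - q j u * deriv (q i) u) * (q i u * q j u)) u :=
    HasDerivAt.fun_sum hterm
  have hQ : HasDerivAt (fun v => (q i v) ^ 2) (2 * q i u * deriv (q i) u) u := by
    simpa [mul_comm, mul_assoc] using (hdq i).fun_pow 2
  have hF : HasDerivAt F (2 * q i u * deriv (q i) u + ∑ j ∈ univ.erase i,
      2 * (q i u * deriv (q j) u - q j u * deriv (q i) u) * (q i u * q j u)) u :=
    hQ.add hS
  -- show the derivative vanishes
  have e1 : ∑ j ∈ univ.erase i, q j u * deriv (q j) u = -(q i u * deriv (q i) u) := by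
    have := Finset.sum_erase_add univ (fun k => q k u * deriv (q k) u) (mem_univ i)
    linarith [hsum, this]
  have e2 : ∑ j ∈ univ.erase i, (q j u) ^ 2 = 1 - (q i u) ^ 2 := by
    have := Finset.sum_erase_add univ (fun k => (q k u) ^ 2) (mem_univ i)
    linarith [hc1 u, this]
  have e3 : ∑ j ∈ univ.erase i,
      2 * (q i u * deriv (q j) u - q j u * deriv (q i) u) * (q i u * q j u)
      = 2 * (q i u) ^ 2 * (∑ j ∈ univ.erase i, q j u * deriv (q j) u)
        - 2 * (q i u * deriv (q i) u) * (∑ j ∈ univ.erase i, (q j u) ^ 2) := by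
    rw [Finset.mul_sum, Finset.mul_sum, ← Finset.sum_sub_distrib]
    exact Finset.sum_congr rfl fun j _ => by ring
  have : 2 * q i u * deriv (q i) u + ∑ j ∈ univ.erase i,
      2 * (q i u * deriv (q j) u - q j u * deriv (q i) u) * (q i u * q j u) = 0 := by
    rw [e3, e1, e2]; ring
  rwa [this] at hF
end
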